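/- Let J ⊆ ℝ be an open interval with 0 ∉ J, let Y : J → ℝ be smooth, and let U = { (x,y) ∈ ℝ × J : Y(y) + x ≠ 0 }. Then the two metrics on U given by g: E = 0, F = Y(y)+x, G = 0 (i.e. ds²_g = 2(Y(y)+x) dx dy) and ḡ: Ē = 0, F̄ = −(Y(y)+x)/y³, Ḡ = (Y(y)+x)²/y⁴ (i.e. ds²_{ḡ} = −2(Y+x)/y³ dx dy + (Y+x)²/y⁴ dy²) have identical projective connection coefficients: K_i(g) = K_i(ḡ) on U for i = 0,1,2,3. Hence g and ḡ are projectively equivalent (have the same unparameterized geodesics). -/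

import Mathlib

noncomputable section

/-- The partial derivative of `f : ℝ² → ℝ` in the `i`-th coordinate direction
(`0 ↦ x`, `1 ↦ y`). -/
def pd (i : Fin 2) (f : ℝ × ℝ → ℝ) (p : ℝ × ℝ) : ℝ :=
  fderiv ℝ f p (if i = 0 then ((1 : ℝ), (0 : ℝ)) else ((0 : ℝ), (1 : ℝ)))

/-- The components of the metric `g = E dx² + 2F dx dy + G dy²`. -/
def gc (E F G : ℝ × ℝ → ℝ) (i j : Fin 2) : ℝ × ℝ → ℝ := fun p =>
  if i = 0 then (if j = 0 then E p else F p) else (if j = 0 then F p else G p)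

/-- The components of the inverse metric. -/
def gInv (E F G : ℝ × ℝ → ℝ) (i j : Fin 2) : ℝ × ℝ → ℝ := fun p =>
  (if i = 0 then (if j = 0 then G p else -F p) else (if j = 0 then -F p else E p)) /
    (E p * G p - F p ^ 2)

/-- The Christoffel symbols `Γ^i_{jk}` of the metric `(E,F,G)`. -/
def Chr (E F G : ℝ × ℝ → ℝ) (i j k : Fin 2) : ℝ × ℝ → ℝ := fun p =>
  (1 / 2) * ∑ m : Fin 2, gInv E F G i m p *
    (pd j (gc E F G m k) p + pd k (gc E F G m j) p - pd m (gc E F G j k) p)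

/-- The projective connection coefficient `K₀ = -Γ²₁₁`. -/
def pK0 (E F G : ℝ × ℝ → ℝ) : ℝ × ℝ → ℝ := fun p => - Chr E F G 1 0 0 p
/-- The projective connection coefficient `K₁ = Γ¹₁₁ - 2Γ²₁₂`. -/
def pK1 (E F G : ℝ × ℝ → ℝ) : ℝ × ℝ → ℝ := fun p => Chr E F G 0 0 0 p - 2 * Chr E F G 1 0 1 p
/-- The projective connection coefficient `K₂ = -Γ²₂₂ + 2Γ¹₁₂`. -/
def pK2 (E F G : ℝ × ℝ → ℝ) : ℝ × ℝ → ℝ := fun p => - Chr E F G 1 1 1 p + 2 * Chr E F G 0 0 1 p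
/-- The projective connection coefficient `K₃ = Γ¹₂₂`. -/
def pK3 (E F G : ℝ × ℝ → ℝ) : ℝ × ℝ → ℝ := fun p => Chr E F G 0 1 1 p

/-- The linear system (12). -/
def Sys12 (K₀ K₁ K₂ K₃ a11 a12 a22 : ℝ × ℝ → ℝ) (U : Set (ℝ × ℝ)) : Prop :=
  ∀ p ∈ U,
    pd 0 a11 p - (2/3) * K₁ p * a11 p + 2 * K₀ p * a12 p = 0 ∧
    pd 1 a11 p + 2 * pd 0 a12 p - (4/3) * K₂ p * a11 p + (2/3) * K₁ p * a12 p
      + 2 * K₀ p * a22 p = 0 ∧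
    2 * pd 1 a12 p + pd 0 a22 p - 2 * K₃ p * a11 p - (2/3) * K₂ p * a12 p
      + (4/3) * K₁ p * a22 p = 0 ∧
    pd 1 a22 p - 2 * K₃ p * a12 p + (2/3) * K₂ p * a22 p = 0

/-- The components of a vector field `v = (v¹, v²)`. -/
def vc (v1 v2 : ℝ × ℝ → ℝ) (m : Fin 2) : ℝ × ℝ → ℝ := fun p => if m = 0 then v1 p else v2 p

/-- `v = (v1, v2)` is a Killing vector field for the metric `(E,F,G)` on `U`. -/
def IsKilling (E F G v1 v2 : ℝ × ℝ → ℝ) (U : Set (ℝ × ℝ)) : Prop :=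
  ∀ p ∈ U, ∀ i j : Fin 2,
    (∑ m : Fin 2, (vc v1 v2 m p * pd m (gc E F G i j) p
      + gc E F G m j p * pd i (vc v1 v2 m) p
      + gc E F G i m p * pd j (vc v1 v2 m) p)) = 0

/-! Both metrics have `E = 0`, and for such metrics the projective connection is
`K₀ = 0`, `K₁ = F_x/F`, `K₂ = (3G_x − 2F_y)/(2F)`, `K₃ = (F G_y − 2G F_y + G G_x)/(2F²)`.
Every remaining coefficient is of the form `c (Y(y) + x)ⁿ yᵏ`, whose partial derivatives are
explicit, so the four equalities become rational identities in `Y + x`, `Y'` and `y`. -/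

@[simp] lemma gc_zero_zero (E F G : ℝ × ℝ → ℝ) : gc E F G 0 0 = E := rfl
@[simp] lemma gc_zero_one (E F G : ℝ × ℝ → ℝ) : gc E F G 0 1 = F := rfl
@[simp] lemma gc_one_zero (E F G : ℝ × ℝ → ℝ) : gc E F G 1 0 = F := rfl
@[simp] lemma gc_one_one (E F G : ℝ × ℝ → ℝ) : gc E F G 1 1 = G := rfl

@[simp] lemma pd_const (i : Fin 2) (c : ℝ) (p : ℝ × ℝ) : pd i (fun _ => c) p = 0 := by
  simp [pd]

lemma pd_zero_eq_deriv {f : ℝ × ℝ → ℝ} {p : ℝ × ℝ} (hf : DifferentiableAt ℝ f p) :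
    pd 0 f p = deriv (fun x => f (x, p.2)) p.1 := by
  have hline : HasDerivAt (fun x : ℝ => (x, p.2)) ((1 : ℝ), (0 : ℝ)) p.1 :=
    (hasDerivAt_id p.1).prodMk (hasDerivAt_const p.1 p.2)
  exact (hf.hasFDerivAt.comp_hasDerivAt p.1 hline).deriv.symm

lemma pd_one_eq_deriv {f : ℝ × ℝ → ℝ} {p : ℝ × ℝ} (hf : DifferentiableAt ℝ f p) :
    pd 1 f p = deriv (fun y => f (p.1, y)) p.2 := by
  have hline : HasDerivAt (fun y : ℝ => (p.1, y)) ((0 : ℝ), (1 : ℝ)) p.2 :=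
    (hasDerivAt_const p.2 p.1).prodMk (hasDerivAt_id p.2)
  exact (hf.hasFDerivAt.comp_hasDerivAt p.2 hline).deriv.symm

section NullMetric

variable (F G : ℝ × ℝ → ℝ) (p : ℝ × ℝ)

lemma pK0_of_E_eq_zero : pK0 (fun _ => 0) F G p = 0 := by
  simp [pK0, Chr, gInv]

lemma pK1_of_E_eq_zero : pK1 (fun _ => 0) F G p = pd 0 F p / F p := by
  rcases eq_or_ne (F p) 0 with h | h
  · simp [pK1, Chr, gInv, h]
  · simp only [pK1, Chr, gInv, Fin.sum_univ_two, Fin.isValue, reduceIte, one_ne_zero,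
      gc_zero_zero, gc_zero_one, gc_one_zero, gc_one_one, pd_const]
    field_simp
    ring

lemma pK2_of_E_eq_zero :
    pK2 (fun _ => 0) F G p = (3 * pd 0 G p - 2 * pd 1 F p) / (2 * F p) := by
  rcases eq_or_ne (F p) 0 with h | h
  · simp [pK2, Chr, gInv, h]
  · simp only [pK2, Chr, gInv, Fin.sum_univ_two, Fin.isValue, reduceIte, one_ne_zero,
      gc_zero_zero, gc_zero_one, gc_one_zero, gc_one_one, pd_const]
    field_simp
    ring

lemma pK3_of_E_eq_zero : pK3 (fun _ => 0) F G p =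
    (F p * pd 1 G p - 2 * G p * pd 1 F p + G p * pd 0 G p) / (2 * F p ^ 2) := by
  rcases eq_or_ne (F p) 0 with h | h
  · simp [pK3, Chr, gInv, h]
  · simp only [pK3, Chr, gInv, Fin.sum_univ_two, Fin.isValue, reduceIte, one_ne_zero,
      gc_zero_one, gc_one_one]
    field_simp
    ring

end NullMetric

section Monomial

variable {Y : ℝ → ℝ} {p : ℝ × ℝ} (c : ℝ) (n : ℕ) (k : ℤ)

lemma differentiableAt_monomial (hY : DifferentiableAt ℝ Y p.2) (ht : p.2 ≠ 0) :
    DifferentiableAt ℝ (fun q : ℝ × ℝ => c * (Y q.2 + q.1) ^ n * q.2 ^ k) p := by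
  fun_prop (disch := simp [ht])

lemma pd_zero_monomial (hY : DifferentiableAt ℝ Y p.2) (ht : p.2 ≠ 0) :
    pd 0 (fun q : ℝ × ℝ => c * (Y q.2 + q.1) ^ n * q.2 ^ k) p
      = c * n * (Y p.2 + p.1) ^ (n - 1) * p.2 ^ k := by
  have h := ((((hasDerivAt_id p.1).const_add (Y p.2)).pow n).const_mul c).mul_const (p.2 ^ k)
  rw [pd_zero_eq_deriv (differentiableAt_monomial c n k hY ht)]
  exact h.deriv.trans (by simp only [id, mul_one]; ring)

lemma pd_one_monomial (hY : DifferentiableAt ℝ Y p.2) (ht : p.2 ≠ 0) :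
    pd 1 (fun q : ℝ × ℝ => c * (Y q.2 + q.1) ^ n * q.2 ^ k) p
      = c * (n * (Y p.2 + p.1) ^ (n - 1) * deriv Y p.2 * p.2 ^ k
          + k * (Y p.2 + p.1) ^ n * p.2 ^ (k - 1)) := by
  have h := (((hY.hasDerivAt.add_const p.1).pow n).const_mul c).mul
    (hasDerivAt_zpow k p.2 (Or.inl ht))
  rw [pd_one_eq_deriv (differentiableAt_monomial c n k hY ht)]
  exact h.deriv.trans (by simp only [Pi.pow_apply]; ring)

end Monomial

theorem stmt15_general
    (J : Set ℝ) (hJopen : IsOpen J) (hJ0 : (0:ℝ) ∉ J)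
    (Y : ℝ → ℝ) (hY : ContDiffOn ℝ (⊤ : ℕ∞) Y J)
    (U : Set (ℝ × ℝ)) (hU : U = {p : ℝ × ℝ | p.2 ∈ J ∧ Y p.2 + p.1 ≠ 0})
    (E F G Eb Fb Gb : ℝ × ℝ → ℝ)
    (hE : ∀ p, E p = 0)
    (hF : ∀ p, F p = Y p.2 + p.1)
    (hG : ∀ p, G p = 0)
    (hEb : ∀ p, Eb p = 0)
    (hFb : ∀ p, Fb p = -(Y p.2 + p.1) / p.2 ^ 3)
    (hGb : ∀ p, Gb p = (Y p.2 + p.1) ^ 2 / p.2 ^ 4) :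
    ∀ p ∈ U,
      pK0 E F G p = pK0 Eb Fb Gb p ∧
      pK1 E F G p = pK1 Eb Fb Gb p ∧
      pK2 E F G p = pK2 Eb Fb Gb p ∧
      pK3 E F G p = pK3 Eb Fb Gb p := by
  subst hU
  rintro p ⟨hpJ, ha⟩
  have ht : p.2 ≠ 0 := ne_of_mem_of_not_mem hpJ hJ0
  have hdY : DifferentiableAt ℝ Y p.2 :=
    (hY.contDiffAt (hJopen.mem_nhds hpJ)).differentiableAt (by simp)
  obtain rfl : E = fun _ => 0 := funext hE
  obtain rfl : Eb = fun _ => 0 := funext hEb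
  obtain rfl : G = fun _ => 0 := funext hG
  obtain rfl : F = fun q => 1 * (Y q.2 + q.1) ^ 1 * q.2 ^ (0 : ℤ) :=
    funext fun q => by simp [hF]
  obtain rfl : Fb = fun q => -1 * (Y q.2 + q.1) ^ 1 * q.2 ^ (-3 : ℤ) :=
    funext fun q => by simp [hFb, zpow_neg, div_eq_mul_inv]
  obtain rfl : Gb = fun q => 1 * (Y q.2 + q.1) ^ 2 * q.2 ^ (-4 : ℤ) :=
    funext fun q => by simp [hGb, zpow_neg, div_eq_mul_inv]
  simp only [pK0_of_E_eq_zero, pK1_of_E_eq_zero, pK2_of_E_eq_zero, pK3_of_E_eq_zero, pd_const,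
    pd_zero_monomial _ _ _ hdY ht, pd_one_monomial _ _ _ hdY ht]
  generalize Y p.2 + p.1 = a at ha ⊢
  refine ⟨trivial, ?_, ?_, ?_⟩ <;> norm_num [zpow_neg] <;> field_simp <;> ring

/-- The Jordan-block metric `g = 2(Y(y)+x)dxdy` and its canonical
projectively equivalent metric `ḡ = −2(Y+x)/y³ dxdy + (Y+x)²/y⁴ dy²` have identical
projective connection coefficients, hence are projectively equivalent. -/
theorem stmt15
    (J : Set ℝ) (hJopen : IsOpen J) (hJint : J.OrdConnected) (hJ0 : (0:ℝ) ∉ J)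
    (Y : ℝ → ℝ) (hY : ContDiffOn ℝ (⊤ : ℕ∞) Y J)
    (U : Set (ℝ × ℝ)) (hU : U = {p : ℝ × ℝ | p.2 ∈ J ∧ Y p.2 + p.1 ≠ 0})
    (E F G Eb Fb Gb : ℝ × ℝ → ℝ)
    (hE : ∀ p, E p = 0)
    (hF : ∀ p, F p = Y p.2 + p.1)
    (hG : ∀ p, G p = 0)
    (hEb : ∀ p, Eb p = 0)
    (hFb : ∀ p, Fb p = -(Y p.2 + p.1) / p.2 ^ 3)
    (hGb : ∀ p, Gb p = (Y p.2 + p.1) ^ 2 / p.2 ^ 4) :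
    ∀ p ∈ U,
      pK0 E F G p = pK0 Eb Fb Gb p ∧
      pK1 E F G p = pK1 Eb Fb Gb p ∧
      pK2 E F G p = pK2 Eb Fb Gb p ∧
      pK3 E F G p = pK3 Eb Fb Gb p :=
  stmt15_general J hJopen hJ0 Y hY U hU E F G Eb Fb Gb hE hF hG hEb hFb hGb
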